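/- arXiv:2210.02178 — 4 statements merged into one kernel-verified Lean document; each statement's English description precedes it below -/
import Mathlib

section
/- Young-type inequality for generalized Orlicz functions: suppose Φ(x,·) satisfies the growth condition (Φ) with exponents 1<p≤q, and set φ_θ(x,v) = Φ(x,v)/v^θ for θ ∈ (0,p]. Then for all ε, a, b > 0 one has φ_θ(x,a)·b^θ ≤ ε^{-θ}·Φ(x,a) + b^θ·φ_θ(x, ε b). -/
open Real

/-- Young-type inequality for generalized Orlicz functions: if `Φ(x,·)` satisfies
the growth condition `(Φ)` with exponents `1 < p ≤ q` and `φ_θ(x,v) = Φ(x,v)/v^θ`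
with `θ ∈ (0,p]`, then for all `ε, a, b > 0`:
`φ_θ(x,a)·b^θ ≤ ε^{-θ}·Φ(x,a) + b^θ·φ_θ(x, εb)`. -/
theorem statement1 {n : ℕ} (Φ : (Fin n → ℝ) → ℝ → ℝ) (p q : ℝ)
    (hp : 1 < p) (hpq : p ≤ q)
    (hΦpos : ∀ x v, 0 < v → 0 < Φ x v)
    (hΦ : ∀ x v w, 0 < v → v ≤ w →
      (w / v) ^ p ≤ Φ x w / Φ x v ∧ Φ x w / Φ x v ≤ (w / v) ^ q)
    (θ : ℝ) (hθ : 0 < θ) (hθp : θ ≤ p) :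
    ∀ (x : Fin n → ℝ) (ε a b : ℝ), 0 < ε → 0 < a → 0 < b →
      (Φ x a / a ^ θ) * b ^ θ ≤
        ε ^ (-θ) * Φ x a + b ^ θ * (Φ x (ε * b) / (ε * b) ^ θ) := by
  intro x ε a b hε ha hb
  have hεb : 0 < ε * b := mul_pos hε hb
  have hA := hΦpos x a ha
  have hB := hΦpos x (ε * b) hεb
  have haθ : (0:ℝ) < a ^ θ := Real.rpow_pos_of_pos ha θ
  have hbθ : (0:ℝ) < b ^ θ := Real.rpow_pos_of_pos hb θ
  have hεbθ : (0:ℝ) < (ε * b) ^ θ := Real.rpow_pos_of_pos hεb θ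
  rcases le_total (ε * b) a with h | h
  · -- b^θ ≤ ε^(-θ) * a^θ
    have hinv : b ≤ ε⁻¹ * a := by
      rw [le_inv_mul_iff₀ hε]; exact h
    have h1 : b ^ θ ≤ ε ^ (-θ) * a ^ θ := by
      calc b ^ θ ≤ (ε⁻¹ * a) ^ θ := Real.rpow_le_rpow hb.le hinv hθ.le
        _ = ε ^ (-θ) * a ^ θ := by
          rw [Real.mul_rpow (by positivity) ha.le, Real.inv_rpow hε.le,
            ← Real.rpow_neg hε.le]
    have h2 : (Φ x a / a ^ θ) * b ^ θ ≤ ε ^ (-θ) * Φ x a := by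
      have := mul_le_mul_of_nonneg_left h1 (le_of_lt (div_pos hA haθ))
      calc (Φ x a / a ^ θ) * b ^ θ ≤ (Φ x a / a ^ θ) * (ε ^ (-θ) * a ^ θ) := this
        _ = ε ^ (-θ) * Φ x a := by field_simp
    have h3 : 0 ≤ b ^ θ * (Φ x (ε * b) / (ε * b) ^ θ) := by positivity
    linarith
  · -- monotonicity case
    have hr : 1 ≤ (ε * b) / a := (one_le_div ha).mpr h
    have h1 : ((ε * b) / a) ^ θ ≤ ((ε * b) / a) ^ p :=
      Real.rpow_le_rpow_of_exponent_le hr hθp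
    have h2 := (hΦ x a (ε * b) ha h).1
    have h3 : ((ε * b) / a) ^ θ ≤ Φ x (ε * b) / Φ x a := h1.trans h2
    rw [Real.div_rpow hεb.le ha.le, div_le_div_iff₀ haθ hA] at h3
    have h4 : Φ x a / a ^ θ ≤ Φ x (ε * b) / (ε * b) ^ θ := by
      rw [div_le_div_iff₀ haθ hεbθ]
      nlinarith
    have h5 : (Φ x a / a ^ θ) * b ^ θ ≤ b ^ θ * (Φ x (ε * b) / (ε * b) ^ θ) := by
      rw [mul_comm]
      exact mul_le_mul_of_nonneg_left h4 hbθ.le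
    have h6 : 0 ≤ ε ^ (-θ) * Φ x a := by positivity
    linarith
end

section
/- De Giorgi–Poincaré lemma: Let u ∈ W^{1,1}(B_r(y)) for some r > 0 and y ∈ ℝ^n, and let k < l be real numbers. Then there exists a constant γ depending only on n such that (l−k)·|A⁻_{k,r}|·|B_r(y) \ A⁻_{l,r}| ≤ γ r^{n+1} ∫_{A⁻_{l,r} \ A⁻_{k,r}} |∇u| dx, where A⁻_{k,r} = B_r(y) ∩ {u < k}. -/
open Real MeasureTheory Metric
open scoped ENNReal NNReal Topology

lemma lint_affine {n : ℕ} (g : EuclideanSpace ℝ (Fin n) → ℝ≥0∞) (hg : Measurable g)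
    (a : EuclideanSpace ℝ (Fin n)) {c : ℝ} (hc : c ≠ 0) :
    ∫⁻ x, g (a + c • x) = ENNReal.ofReal |(c ^ n)⁻¹| * ∫⁻ x, g x := by
  have h1 : ∫⁻ y, g (a + y) ∂(Measure.map (c • ·) volume) = ∫⁻ x, g (a + c • x) :=
    lintegral_map (hg.comp (measurable_const_add a)) (measurable_const_smul c)
  rw [← h1, Measure.map_addHaar_smul volume hc, lintegral_smul_measure,
    finrank_euclideanSpace_fin, lintegral_add_left_eq_self (fun x => g x) a, smul_eq_mul]



lemma seg_key {n : ℕ} {u : EuclideanSpace ℝ (Fin n) → ℝ} {y : EuclideanSpace ℝ (Fin n)}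
    {r k l : ℝ} (hr : 0 < r) (hkl : k < l)
    (hdiff : DifferentiableOn ℝ u (ball y r))
    {x z : EuclideanSpace ℝ (Fin n)} (hx : x ∈ ball y r) (hux : u x < k)
    (hz : z ∈ ball y r) (huz : l ≤ u z) :
    ENNReal.ofReal (l - k) ≤ ENNReal.ofReal (2 * r) *
      ∫⁻ t in Set.Icc (0:ℝ) 1,
        (({w ∈ ball y r | u w < l} \ {w ∈ ball y r | u w < k}).indicator
          (fun w => (‖fderiv ℝ u w‖₊ : ℝ≥0∞))) ((1 - t) • x + t • z) := by
  set S := {w ∈ ball y r | u w < l} \ {w ∈ ball y r | u w < k} with hSdef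
  set Φ : EuclideanSpace ℝ (Fin n) → ℝ≥0∞ :=
    S.indicator (fun w => (‖fderiv ℝ u w‖₊ : ℝ≥0∞)) with hΦdef
  set γ : ℝ → EuclideanSpace ℝ (Fin n) := fun t => x + t • (z - x) with hγdef
  have hgam : ∀ t : ℝ, (1 - t) • x + t • z = γ t := by
    intro t; simp only [hγdef]; module
  simp_rw [hgam]
  by_cases hfin : ∫⁻ t in Set.Icc (0:ℝ) 1, Φ (γ t) = ∞
  · rw [hfin, ENNReal.mul_top (by simp [ENNReal.ofReal_eq_zero]; linarith)]
    exact le_top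
  have hseg : ∀ t ∈ Set.Icc (0:ℝ) 1, γ t ∈ ball y r := by
    intro t ht
    have := (convex_ball y r) hx hz (by linarith [ht.2] : (0:ℝ) ≤ 1 - t) ht.1 (by ring)
    rwa [hgam t] at this
  set f : ℝ → ℝ := fun t => u (γ t) with hfdef
  set D : ℝ → ℝ := fun t => fderiv ℝ u (γ t) (z - x) with hDdef
  have hderiv : ∀ t ∈ Set.Icc (0:ℝ) 1, HasDerivAt f (D t) t := by
    intro t ht
    have hu : DifferentiableAt ℝ u (γ t) :=
      hdiff.differentiableAt (isOpen_ball.mem_nhds (hseg t ht))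
    have h1 : HasDerivAt γ (z - x) t := by
      have := ((hasDerivAt_id t).smul_const (z - x)).const_add x
      simpa only [id_eq, one_smul] using this
    exact hu.hasFDerivAt.comp_hasDerivAt t h1
  have hcont : ContinuousOn f (Set.Icc 0 1) := fun t ht =>
    ((hderiv t ht).continuousAt).continuousWithinAt
  have hf0 : f 0 = u x := by simp [hfdef, hγdef]
  have hf1 : f 1 = u z := by simp [hfdef, hγdef]
  set T := {t ∈ Set.Icc (0:ℝ) 1 | l ≤ f t} with hTdef
  have hT1 : (1:ℝ) ∈ T := ⟨⟨zero_le_one, le_refl 1⟩, by rw [hf1]; exact huz⟩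
  have hTbdd : BddBelow T := ⟨0, fun t ht => ht.1.1⟩
  have hTc : IsClosed T :=
    hcont.preimage_isClosed_of_isClosed isClosed_Icc isClosed_Ici
  set t2 := sInf T with ht2def
  have ht2T : t2 ∈ T := hTc.csInf_mem ⟨1, hT1⟩ hTbdd
  have ht2I : t2 ∈ Set.Icc (0:ℝ) 1 := ht2T.1
  have hft2ge : l ≤ f t2 := ht2T.2
  have hflt : ∀ t, 0 ≤ t → t < t2 → f t < l := by
    intro t h0 hlt
    by_contra h; push_neg at h
    exact absurd (csInf_le hTbdd ⟨⟨h0, hlt.le.trans ht2I.2⟩, h⟩) (not_le.mpr hlt)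
  have ht2pos : 0 < t2 := by
    rcases ht2I.1.lt_or_eq with h | h
    · exact h
    · rw [← h, hf0] at hft2ge; linarith
  have hft2 : f t2 = l := by
    refine le_antisymm ?_ hft2ge
    refine le_of_tendsto (((hderiv t2 ht2I).continuousAt).tendsto.mono_left
      (nhdsWithin_le_nhds : 𝓝[Set.Iio t2] t2 ≤ 𝓝 t2)) ?_
    filter_upwards [Ioo_mem_nhdsLT_of_mem (⟨ht2pos, le_refl t2⟩ : t2 ∈ Set.Ioc 0 t2)] with t ht
    exact (hflt t ht.1.le ht.2).le
  set T2 := {t ∈ Set.Icc (0:ℝ) t2 | f t ≤ k} with hT2def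
  have h0T2 : (0:ℝ) ∈ T2 := ⟨⟨le_refl 0, ht2I.1⟩, by rw [hf0]; exact hux.le⟩
  have hT2bdd : BddAbove T2 := ⟨t2, fun t ht => ht.1.2⟩
  have hT2c : IsClosed T2 :=
    (hcont.mono (Set.Icc_subset_Icc le_rfl ht2I.2)).preimage_isClosed_of_isClosed
      isClosed_Icc isClosed_Iic
  set t1 := sSup T2 with ht1def
  have ht1T : t1 ∈ T2 := hT2c.csSup_mem ⟨0, h0T2⟩ hT2bdd
  have ht1I : t1 ∈ Set.Icc (0:ℝ) t2 := ht1T.1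
  have hft1 : f t1 ≤ k := ht1T.2
  have ht1lt : t1 < t2 :=
    lt_of_le_of_ne ht1I.2 (fun h => by rw [h, hft2] at hft1; linarith)
  have hfgt : ∀ t, t1 < t → t ≤ t2 → k < f t := by
    intro t hgt hle
    by_contra h; push_neg at h
    exact absurd (le_csSup hT2bdd ⟨⟨ht1I.1.trans hgt.le, hle⟩, h⟩) (not_le.mpr hgt)
  have hsubI : Set.Ioo t1 t2 ⊆ Set.Icc (0:ℝ) 1 := fun t ht =>
    ⟨ht1I.1.trans ht.1.le, ht.2.le.trans ht2I.2⟩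
  have hmemS : ∀ t ∈ Set.Ioo t1 t2, γ t ∈ S := by
    intro t ht
    refine ⟨⟨hseg t (hsubI ht), hflt t (ht1I.1.trans ht.1.le) ht.2⟩, ?_⟩
    intro hmem
    exact absurd hmem.2 (not_lt.mpr (hfgt t ht.1 ht.2.le).le)
  have hzx : ‖z - x‖ ≤ 2 * r := by
    have h1 : dist z x ≤ dist z y + dist y x := dist_triangle z y x
    have h2 : dist z y < r := mem_ball.mp hz
    have h3 : dist y x < r := by rw [dist_comm]; exact mem_ball.mp hx
    rw [← dist_eq_norm]; linarith
  have hmD : Measurable D := by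
    have hγm : Measurable γ := by fun_prop
    have h1 : Measurable fun t => fderiv ℝ u (γ t) :=
      (measurable_fderiv ℝ u).comp hγm
    exact (ContinuousLinearMap.apply ℝ ℝ (z - x)).continuous.measurable.comp h1
  have hbD : ∀ t ∈ Set.Ioo t1 t2, (‖D t‖₊ : ℝ≥0∞) ≤ ENNReal.ofReal (2 * r) * Φ (γ t) := by
    intro t ht
    rw [hΦdef, Set.indicator_of_mem (hmemS t ht)]
    have hDle : ‖D t‖ ≤ 2 * r * ‖fderiv ℝ u (γ t)‖ := by
      calc ‖D t‖ ≤ ‖fderiv ℝ u (γ t)‖ * ‖z - x‖ := (fderiv ℝ u (γ t)).le_opNorm _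
        _ ≤ ‖fderiv ℝ u (γ t)‖ * (2 * r) :=
          mul_le_mul_of_nonneg_left hzx (norm_nonneg _)
        _ = 2 * r * ‖fderiv ℝ u (γ t)‖ := by ring
    calc (‖D t‖₊ : ℝ≥0∞) = ENNReal.ofReal ‖D t‖ := (ofReal_norm _).symm
      _ ≤ ENNReal.ofReal (2 * r * ‖fderiv ℝ u (γ t)‖) := ENNReal.ofReal_le_ofReal hDle
      _ = ENNReal.ofReal (2 * r) * ENNReal.ofReal ‖fderiv ℝ u (γ t)‖ :=
        ENNReal.ofReal_mul (by positivity)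
      _ = _ := by rw [ofReal_norm, enorm_eq_nnnorm]
  have chain : ∫⁻ t in Set.Ioc t1 t2, (‖D t‖₊ : ℝ≥0∞) ≤
      ENNReal.ofReal (2 * r) * ∫⁻ t in Set.Icc (0:ℝ) 1, Φ (γ t) := by
    have e1 : ∫⁻ t in Set.Ioc t1 t2, (‖D t‖₊ : ℝ≥0∞) =
        ∫⁻ t in Set.Ioo t1 t2, (‖D t‖₊ : ℝ≥0∞) :=
      (setLIntegral_congr Ioo_ae_eq_Ioc).symm
    rw [e1]
    calc ∫⁻ t in Set.Ioo t1 t2, (‖D t‖₊ : ℝ≥0∞)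
        ≤ ∫⁻ t in Set.Ioo t1 t2, ENNReal.ofReal (2 * r) * Φ (γ t) :=
          setLIntegral_mono' measurableSet_Ioo hbD
      _ ≤ ∫⁻ t in Set.Icc (0:ℝ) 1, ENNReal.ofReal (2 * r) * Φ (γ t) :=
          lintegral_mono_set hsubI
      _ = ENNReal.ofReal (2 * r) * ∫⁻ t in Set.Icc (0:ℝ) 1, Φ (γ t) :=
          lintegral_const_mul' _ _ ENNReal.ofReal_ne_top
  have hInt : IntegrableOn D (Set.Ioc t1 t2) := by
    refine ⟨hmD.aestronglyMeasurable, ?_⟩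
    exact chain.trans_lt (ENNReal.mul_lt_top ENNReal.ofReal_lt_top
      (lt_top_iff_ne_top.mpr hfin))
  have hFTC : ∫ t in t1..t2, D t = f t2 - f t1 := by
    refine intervalIntegral.integral_eq_sub_of_hasDerivAt (fun t ht => ?_)
      ((intervalIntegrable_iff_integrableOn_Ioc_of_le ht1lt.le).mpr hInt)
    rw [Set.uIcc_of_le ht1lt.le] at ht
    exact hderiv t ⟨ht1I.1.trans ht.1, ht.2.trans ht2I.2⟩
  calc ENNReal.ofReal (l - k)
      ≤ ENNReal.ofReal (∫ t in Set.Ioc t1 t2, ‖D t‖) := by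
        refine ENNReal.ofReal_le_ofReal ?_
        have h2 : l - k ≤ f t2 - f t1 := by rw [hft2]; linarith
        have h3 : ∫ t in Set.Ioc t1 t2, D t ≤ ∫ t in Set.Ioc t1 t2, ‖D t‖ :=
          integral_mono hInt hInt.norm (fun t => le_abs_self _)
        have h4 : ∫ t in t1..t2, D t = ∫ t in Set.Ioc t1 t2, D t :=
          intervalIntegral.integral_of_le ht1lt.le
        linarith [hFTC, h4 ▸ hFTC]
    _ = ∫⁻ t in Set.Ioc t1 t2, (‖D t‖₊ : ℝ≥0∞) := by
        rw [ofReal_integral_eq_lintegral_ofReal hInt.norm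
          (Filter.Eventually.of_forall fun t => norm_nonneg _)]
        simp_rw [ofReal_norm, enorm_eq_nnnorm]
    _ ≤ _ := chain


/-- De Giorgi–Poincaré lemma: for `u ∈ W^{1,1}(B_r(y))` and levels `k < l`,
`(l−k)·|A⁻_{k,r}|·|B_r(y) \ A⁻_{l,r}| ≤ γ r^{n+1} ∫_{A⁻_{l,r} \ A⁻_{k,r}} |∇u|`,
where `A⁻_{k,r} = B_r(y) ∩ {u < k}` and `γ = γ(n)`. -/
theorem statement3 (n : ℕ) (hn : 0 < n) :
    ∃ γ : ℝ, 0 < γ ∧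
      ∀ (y : EuclideanSpace ℝ (Fin n)) (r : ℝ), 0 < r →
      ∀ u : EuclideanSpace ℝ (Fin n) → ℝ,
        DifferentiableOn ℝ u (ball y r) →
        IntegrableOn (fun x => ‖fderiv ℝ u x‖) (ball y r) →
      ∀ k l : ℝ, k < l →
        (l - k) * (volume {x ∈ ball y r | u x < k}).toReal *
            (volume (ball y r \ {x ∈ ball y r | u x < l})).toReal ≤
          γ * r ^ (n + 1) *
            ∫ x in {x ∈ ball y r | u x < l} \ {x ∈ ball y r | u x < k},
              ‖fderiv ℝ u x‖ := by
  haveI : Nonempty (Fin n) := ⟨⟨0, hn⟩⟩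
  haveI : Nontrivial (EuclideanSpace ℝ (Fin n)) := inferInstance
  set c1 := volume (ball (0 : EuclideanSpace ℝ (Fin n)) 1) with hc1def
  have c1fin : c1 < ∞ := measure_ball_lt_top
  have c1pos : 0 < c1 := measure_ball_pos _ _ one_pos
  set cr := c1.toReal with hcrdef
  have hc1eq : c1 = ENNReal.ofReal cr := (ENNReal.ofReal_toReal c1fin.ne).symm
  have hcr0 : (0:ℝ) ≤ cr := ENNReal.toReal_nonneg
  have hγpos : 0 < 2 ^ (n + 1) * cr :=
    mul_pos (by positivity) (ENNReal.toReal_pos c1pos.ne' c1fin.ne)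
  refine ⟨2 ^ (n + 1) * cr, hγpos, ?_⟩
  intro y r hr u hdiff hint k l hkl
  set B := ball y r with hB
  set Al := {x ∈ B | u x < l} with hAldef
  set Ak := {x ∈ B | u x < k} with hAkdef
  set S := Al \ Ak with hSdef
  set g : EuclideanSpace ℝ (Fin n) → ℝ≥0∞ := fun w => (‖fderiv ℝ u w‖₊ : ℝ≥0∞) with hgdef
  set Φ : EuclideanSpace ℝ (Fin n) → ℝ≥0∞ := S.indicator g with hΦdef
  set I := ∫⁻ w, Φ w with hIdef
  have huc : ContinuousOn u B := hdiff.continuousOn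
  have hAlo : IsOpen Al := huc.isOpen_inter_preimage isOpen_ball isOpen_Iio
  have hAko : IsOpen Ak := huc.isOpen_inter_preimage isOpen_ball isOpen_Iio
  have hS : MeasurableSet S := hAlo.measurableSet.diff hAko.measurableSet
  have hg : Measurable g := (measurable_fderiv ℝ u).nnnorm.coe_nnreal_ennreal
  have hΦ : Measurable Φ := hg.indicator hS
  have hSsub : S ⊆ B := fun w hw => hw.1.1
  have hIset : I = ∫⁻ w in S, g w := lintegral_indicator hS g
  have hIfin : I ≠ ∞ := by
    rw [hIset]
    refine ((lintegral_mono_set hSsub).trans_lt ?_).ne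
    have h2 := hint.2
    simp only [HasFiniteIntegral, enorm_eq_nnnorm, nnnorm_norm] at h2
    exact h2
  have hIeq : ENNReal.ofReal (∫ x in S, ‖fderiv ℝ u x‖) = I := by
    rw [ofReal_integral_eq_lintegral_ofReal (hint.mono_set hSsub)
      (Filter.Eventually.of_forall fun x => norm_nonneg _), hIset]
    simp_rw [ofReal_norm, enorm_eq_nnnorm]; rfl
  -- change of variables core bound
  have hcore : ∀ c : ℝ, 1/2 ≤ c → ∀ a : EuclideanSpace ℝ (Fin n),
      ∫⁻ w, Φ (a + c • w) ≤ ENNReal.ofReal (2 ^ n) * I := by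
    intro c hc a
    have hcpos : (0:ℝ) < c := lt_of_lt_of_le one_half_pos hc
    rw [lint_affine Φ hΦ a hcpos.ne']
    refine mul_le_mul_left (ENNReal.ofReal_le_ofReal ?_) I
    rw [abs_of_nonneg (by positivity)]
    calc (c ^ n)⁻¹ ≤ ((1/2:ℝ) ^ n)⁻¹ :=
          inv_anti₀ (pow_pos one_half_pos n) (pow_le_pow_left₀ (by norm_num) hc n)
        _ = 2 ^ n := by rw [one_div, inv_pow, inv_inv]

  -- segment bound
  have hseg : ∀ z ∈ B \ Al, ∀ x ∈ Ak, ENNReal.ofReal (l - k) ≤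
      ENNReal.ofReal (2 * r) * ∫⁻ t in Set.Icc (0:ℝ) 1, Φ ((1 - t) • x + t • z) := by
    intro z hz x hx
    have hz2 := hz.2
    have hz1 := hz.1
    rw [hAldef] at hz2
    rw [hAkdef] at hx
    rw [hB] at hz1 hz2 hx
    have huz : l ≤ u z := by
      by_contra h; push_neg at h; exact hz2 ⟨hz1, h⟩
    simp only [hΦdef, hgdef, hSdef, hAldef, hAkdef, hB]
    exact seg_key hr hkl hdiff hx.1 hx.2 hz1 huz
  have hmB : MeasurableSet B := measurableSet_ball
  -- per-t bound
  have hpert : ∀ t ∈ Set.Icc (0:ℝ) 1,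
      ∫⁻ z in B, ∫⁻ x in B, Φ ((1 - t) • x + t • z) ≤
        volume B * (ENNReal.ofReal (2 ^ n) * I) := by
    intro t _ht
    rcases le_or_gt t (1/2) with h | h
    · have hb : ∀ z, ∫⁻ x in B, Φ ((1 - t) • x + t • z) ≤ ENNReal.ofReal (2 ^ n) * I := by
        intro z
        calc ∫⁻ x in B, Φ ((1 - t) • x + t • z)
            ≤ ∫⁻ x, Φ ((1 - t) • x + t • z) := setLIntegral_le_lintegral _ _
          _ = ∫⁻ x, Φ (t • z + (1 - t) • x) := lintegral_congr fun x => by rw [add_comm]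
          _ ≤ ENNReal.ofReal (2 ^ n) * I := hcore (1 - t) (by linarith) (t • z)
      calc ∫⁻ z in B, ∫⁻ x in B, Φ ((1 - t) • x + t • z)
          ≤ ∫⁻ _z in B, (ENNReal.ofReal (2 ^ n) * I) :=
            setLIntegral_mono' hmB fun z _ => hb z
        _ = ENNReal.ofReal (2 ^ n) * I * volume B := setLIntegral_const _ _
        _ = volume B * (ENNReal.ofReal (2 ^ n) * I) := mul_comm _ _
    · have hsw : ∫⁻ z in B, ∫⁻ x in B, Φ ((1 - t) • x + t • z) =
          ∫⁻ x in B, ∫⁻ z in B, Φ ((1 - t) • x + t • z) := by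
        apply lintegral_lintegral_swap
        exact (hΦ.comp (by fun_prop : Measurable fun p :
          EuclideanSpace ℝ (Fin n) × EuclideanSpace ℝ (Fin n) =>
            (1 - t) • p.2 + t • p.1)).aemeasurable
      rw [hsw]
      have hb : ∀ x, ∫⁻ z in B, Φ ((1 - t) • x + t • z) ≤ ENNReal.ofReal (2 ^ n) * I := by
        intro x
        calc ∫⁻ z in B, Φ ((1 - t) • x + t • z)
            ≤ ∫⁻ z, Φ ((1 - t) • x + t • z) := setLIntegral_le_lintegral _ _
          _ ≤ ENNReal.ofReal (2 ^ n) * I := hcore t h.le ((1 - t) • x)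
      calc ∫⁻ x in B, ∫⁻ z in B, Φ ((1 - t) • x + t • z)
          ≤ ∫⁻ _x in B, (ENNReal.ofReal (2 ^ n) * I) :=
            setLIntegral_mono' hmB fun x _ => hb x
        _ = ENNReal.ofReal (2 ^ n) * I * volume B := setLIntegral_const _ _
        _ = volume B * (ENNReal.ofReal (2 ^ n) * I) := mul_comm _ _
  -- swaps
  have hswap1 : ∀ z : EuclideanSpace ℝ (Fin n),
      ∫⁻ x in B, ∫⁻ t in Set.Icc (0:ℝ) 1, Φ ((1 - t) • x + t • z) =
      ∫⁻ t in Set.Icc (0:ℝ) 1, ∫⁻ x in B, Φ ((1 - t) • x + t • z) := by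
    intro z
    apply lintegral_lintegral_swap
    exact (hΦ.comp (by fun_prop : Measurable fun p : EuclideanSpace ℝ (Fin n) × ℝ =>
      (1 - p.2) • p.1 + p.2 • z)).aemeasurable
  have hmeasInner : Measurable (Function.uncurry
      fun (z : EuclideanSpace ℝ (Fin n)) (t : ℝ) =>
        ∫⁻ x in B, Φ ((1 - t) • x + t • z)) := by
    apply Measurable.lintegral_prod_right
      (f := fun (p : EuclideanSpace ℝ (Fin n) × ℝ) (x : EuclideanSpace ℝ (Fin n)) =>
        Φ ((1 - p.2) • x + p.2 • p.1))
    exact hΦ.comp (by fun_prop)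
  have hswap2 : ∫⁻ z in B, ∫⁻ t in Set.Icc (0:ℝ) 1,
        ∫⁻ x in B, Φ ((1 - t) • x + t • z) =
      ∫⁻ t in Set.Icc (0:ℝ) 1, ∫⁻ z in B,
        ∫⁻ x in B, Φ ((1 - t) • x + t • z) :=
    lintegral_lintegral_swap hmeasInner.aemeasurable
  -- main chain
  set L := ENNReal.ofReal (l - k) * volume Ak * volume (B \ Al) with hLdef
  have hmBAl : MeasurableSet (B \ Al) := hmB.diff hAlo.measurableSet
  have hvolB : volume B = ENNReal.ofReal (r ^ n) * c1 := by
    rw [hB, Measure.addHaar_ball volume y hr.le, finrank_euclideanSpace_fin, ← hc1def]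
  have final_ennreal : L ≤ ENNReal.ofReal (2 ^ (n+1) * cr * r ^ (n+1)) * I := by
    calc L = ∫⁻ _z in B \ Al, ∫⁻ _x in Ak, ENNReal.ofReal (l - k) := by
          rw [setLIntegral_const, setLIntegral_const]
      _ ≤ ∫⁻ z in B \ Al, ∫⁻ x in Ak,
            (ENNReal.ofReal (2 * r) * ∫⁻ t in Set.Icc (0:ℝ) 1, Φ ((1 - t) • x + t • z)) := by
          refine setLIntegral_mono' hmBAl fun z hz => ?_
          refine setLIntegral_mono' hAko.measurableSet fun x hx => ?_
          exact hseg z hz x hx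
      _ ≤ ∫⁻ z in B, ∫⁻ x in B,
            (ENNReal.ofReal (2 * r) * ∫⁻ t in Set.Icc (0:ℝ) 1, Φ ((1 - t) • x + t • z)) := by
          refine le_trans (lintegral_mono fun z => lintegral_mono_set fun x hx => ?_)
            (lintegral_mono_set Set.diff_subset)
          rw [hAkdef] at hx; exact hx.1
      _ = ENNReal.ofReal (2 * r) * ∫⁻ z in B, ∫⁻ x in B,
            ∫⁻ t in Set.Icc (0:ℝ) 1, Φ ((1 - t) • x + t • z) := by
          simp_rw [lintegral_const_mul' (ENNReal.ofReal (2 * r)) _ ENNReal.ofReal_ne_top]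
      _ = ENNReal.ofReal (2 * r) * ∫⁻ t in Set.Icc (0:ℝ) 1, ∫⁻ z in B,
            ∫⁻ x in B, Φ ((1 - t) • x + t • z) := by
          rw [← hswap2]
          exact congrArg _ (lintegral_congr fun z => hswap1 z)
      _ ≤ ENNReal.ofReal (2 * r) * ∫⁻ _t in Set.Icc (0:ℝ) 1,
            (volume B * (ENNReal.ofReal (2 ^ n) * I)) :=
          mul_le_mul_right (setLIntegral_mono' measurableSet_Icc hpert) _
      _ = ENNReal.ofReal (2 * r) * (volume B * (ENNReal.ofReal (2 ^ n) * I)) := by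
          rw [setLIntegral_const, Real.volume_Icc]
          norm_num
      _ = ENNReal.ofReal (2 ^ (n+1) * cr * r ^ (n+1)) * I := by
          have e1 : ∀ tr : ℝ, 0 ≤ tr →
              ENNReal.ofReal (tr * (r ^ n * (cr * 2 ^ n))) * I =
              ENNReal.ofReal tr * (ENNReal.ofReal (r ^ n) * ENNReal.ofReal cr *
                (ENNReal.ofReal (2 ^ n) * I)) := by
            intro tr htr
            rw [ENNReal.ofReal_mul htr,
              ENNReal.ofReal_mul (by positivity : (0:ℝ) ≤ r ^ n),
              ENNReal.ofReal_mul hcr0]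
            ring
          rw [hvolB, hc1eq, show (2:ℝ) ^ (n+1) * cr * r ^ (n+1) =
            (2 * r) * (r ^ n * (cr * 2 ^ n)) from by ring,
            e1 (2 * r) (by positivity)]
  have hRfin : ENNReal.ofReal (2 ^ (n+1) * cr * r ^ (n+1)) * I ≠ ∞ :=
    ENNReal.mul_ne_top ENNReal.ofReal_ne_top hIfin
  have hmain := ENNReal.toReal_mono hRfin final_ennreal
  rw [hLdef, ENNReal.toReal_mul, ENNReal.toReal_mul, ENNReal.toReal_mul,
    ENNReal.toReal_ofReal (by linarith : (0:ℝ) ≤ l - k),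
    ENNReal.toReal_ofReal (by positivity : (0:ℝ) ≤ 2 ^ (n+1) * cr * r ^ (n+1)),
    ← hIeq, ENNReal.toReal_ofReal (integral_nonneg fun x => norm_nonneg _)] at hmain
  calc (l - k) * (volume Ak).toReal * (volume (B \ Al)).toReal ≤
      2 ^ (n+1) * cr * r ^ (n+1) * ∫ x in S, ‖fderiv ℝ u x‖ := hmain
    _ = 2 ^ (n+1) * cr * r ^ (n+1) * ∫ x in S, ‖fderiv ℝ u x‖ := rfl
end

section
/- Suppose Φ(x,v) = v^p + a(x) v^q with 0 ≤ a(x) ≤ 1 and 1 < p < q, and suppose for a ball B_r(x₀) one has osc_{B_r(x₀)} a ≤ A r^{q−p} (log(1/r))^{L(q−p)} and a(x₀) = 0, where A, L > 0 and 0 < r < 1. Then for all v with r ≤ v ≤ K·(log(1/r))^{−L} and all x, y ∈ B_r(x₀): Φ(x, v/r) ≤ γ(K, A, p, q) · Φ(y, v/r), i.e. sup over B_r of Φ(·, v/r) is bounded by a constant times the infimum. -/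
/-!
Since `a(x₀) = 0`, on the ball `a ≤ osc a ≤ A r^{q-p} λ(r)^{-(q-p)}` with `λ(r) = (log(1/r))^{-L}`,
so `a(x) (v/r)^{q-p} ≤ A (v/λ(r))^{q-p} ≤ A K^{q-p}`: at the scale `v/r` the `q`-phase at `x` is
at most `A K^{q-p}` times the `p`-phase, which never exceeds `Φ(y, v/r)`.
Hence `γ = 1 + A K^{q-p}`.
-/

open Real Metric

noncomputable def doublePhase (p q α t : ℝ) : ℝ := t ^ p + α * t ^ q

lemma doublePhase_le_mul_doublePhase {p q α β t M : ℝ} (ht : 0 < t) (hβ : 0 ≤ β)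
    (hM : 0 ≤ M) (hα : α * t ^ (q - p) ≤ M) :
    doublePhase p q α t ≤ (1 + M) * doublePhase p q β t := by
  have htp : 0 < t ^ p := rpow_pos_of_pos ht p
  have hsplit : t ^ q = t ^ (q - p) * t ^ p := by
    rw [← rpow_add ht, sub_add_cancel]
  have hβq : 0 ≤ β * t ^ q := mul_nonneg hβ (rpow_nonneg ht.le q)
  calc doublePhase p q α t = t ^ p + α * t ^ (q - p) * t ^ p := by
        rw [doublePhase, hsplit, mul_assoc]
    _ ≤ t ^ p + M * t ^ p := by gcongr
    _ = (1 + M) * t ^ p := by ring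
    _ ≤ (1 + M) * doublePhase p q β t := by
        gcongr
        exact le_add_of_nonneg_right hβq

lemma mul_rpow_le_of_le_mul_rpow_neg {v ℓ L K : ℝ} (hℓ : 0 < ℓ) (hvK : v ≤ K * ℓ ^ (-L)) :
    v * ℓ ^ L ≤ K := by
  have h := mul_le_mul_of_nonneg_right hvK (rpow_nonneg hℓ.le L)
  rwa [mul_assoc, ← rpow_add hℓ, neg_add_cancel, rpow_zero, mul_one] at h

lemma rpow_mul_rpow_mul_div_rpow {r v ℓ L s : ℝ} (hr : 0 < r) (hv : 0 ≤ v) (hℓ : 0 ≤ ℓ) :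
    r ^ s * ℓ ^ (L * s) * (v / r) ^ s = (v * ℓ ^ L) ^ s := by
  rw [mul_rpow hv (rpow_nonneg hℓ L), rpow_mul hℓ, mul_right_comm,
    ← mul_rpow hr.le (div_nonneg hv hr.le), mul_div_cancel₀ v hr.ne']

lemma mul_div_rpow_le_of_le_mul_rpow_neg {α A r v ℓ L K s : ℝ} (hA : 0 ≤ A) (hr : 0 < r)
    (hv : 0 ≤ v) (hℓ : 0 < ℓ) (hs : 0 ≤ s) (hα : α ≤ A * r ^ s * ℓ ^ (L * s))
    (hvK : v ≤ K * ℓ ^ (-L)) :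
    α * (v / r) ^ s ≤ A * K ^ s :=
  calc α * (v / r) ^ s ≤ A * r ^ s * ℓ ^ (L * s) * (v / r) ^ s :=
        mul_le_mul_of_nonneg_right hα (rpow_nonneg (div_nonneg hv hr.le) s)
    _ = A * (v * ℓ ^ L) ^ s := by
        rw [← rpow_mul_rpow_mul_div_rpow hr hv hℓ.le]; ring
    _ ≤ A * K ^ s := by
        gcongr
        exact mul_rpow_le_of_le_mul_rpow_neg hℓ hvK

theorem statement4_general (n : ℕ) (p q A L K : ℝ)
    (hpq : p < q) (hA : 0 < A) (hK : 0 < K) :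
    ∃ γ : ℝ, 0 < γ ∧
      ∀ (a : (Fin n → ℝ) → ℝ) (x₀ : Fin n → ℝ) (r : ℝ),
        0 < r → r < 1 →
        (∀ x, 0 ≤ a x ∧ a x ≤ 1) →
        (∀ x ∈ ball x₀ r, ∀ y ∈ ball x₀ r,
          a x - a y ≤ A * r ^ (q - p) * (Real.log (1 / r)) ^ (L * (q - p))) →
        a x₀ = 0 →
        ∀ v : ℝ, r ≤ v → v ≤ K * (Real.log (1 / r)) ^ (-L) →
        ∀ x ∈ ball x₀ r, ∀ y ∈ ball x₀ r,
          (v / r) ^ p + a x * (v / r) ^ q ≤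
            γ * ((v / r) ^ p + a y * (v / r) ^ q) := by
  refine ⟨1 + A * K ^ (q - p), by positivity, ?_⟩
  intro a x₀ r hr hr1 ha hosc ha₀ v hrv hvK x hx y _
  have hlog : 0 < Real.log (1 / r) := log_pos ((one_lt_div hr).mpr hr1)
  have hax : a x ≤ A * r ^ (q - p) * (Real.log (1 / r)) ^ (L * (q - p)) := by
    simpa [ha₀] using hosc x hx x₀ (mem_ball_self hr)
  exact doublePhase_le_mul_doublePhase (div_pos (hr.trans_le hrv) hr) (ha y).1 (by positivity)
    (mul_div_rpow_le_of_le_mul_rpow_neg hA.le hr (hr.le.trans hrv) hlog (sub_nonneg.mpr hpq.le)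
      hax hvK)

/-- Double-phase integrand `Φ(x,v) = v^p + a(x)v^q` with `a(x₀) = 0` and
`osc_{B_r(x₀)} a ≤ A r^{q−p}(log(1/r))^{L(q−p)}`: for `r ≤ v ≤ K(log(1/r))^{−L}`
the values `Φ(·, v/r)` are comparable on `B_r(x₀)` with constant `γ(K,A,p,q)`. -/
theorem statement4 (n : ℕ) (p q A L K : ℝ)
    (hp : 1 < p) (hpq : p < q) (hA : 0 < A) (hL : 0 < L) (hK : 0 < K) :
    ∃ γ : ℝ, 0 < γ ∧
      ∀ (a : (Fin n → ℝ) → ℝ) (x₀ : Fin n → ℝ) (r : ℝ),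
        0 < r → r < 1 →
        (∀ x, 0 ≤ a x ∧ a x ≤ 1) →
        (∀ x ∈ ball x₀ r, ∀ y ∈ ball x₀ r,
          a x - a y ≤ A * r ^ (q - p) * (Real.log (1 / r)) ^ (L * (q - p))) →
        a x₀ = 0 →
        ∀ v : ℝ, r ≤ v → v ≤ K * (Real.log (1 / r)) ^ (-L) →
        ∀ x ∈ ball x₀ r, ∀ y ∈ ball x₀ r,
          (v / r) ^ p + a x * (v / r) ^ q ≤
            γ * ((v / r) ^ p + a y * (v / r) ^ q) :=
  statement4_general n p q A L K hpq hA hK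
end

section
/- Oscillation decay implies continuity: let ω : (0, R] → [0, ∞) be non-decreasing and suppose there exist a continuous non-decreasing function λ : (0,R] → (0,1], a continuous non-increasing function Λ : (0,R] → [1,∞), and constants γ, β > 0 such that for all 0 < r ≤ R/2: ω(r/2) ≤ (1 − (λ(r)/4)·exp(−γ Λ(r)^β))·ω(r) + γ·(r/λ(r))·exp(γ Λ(r)^β). If ∫_0 exp(γ Λ(r)^β) dr/λ(r) < ∞ and ∫_0 λ(r) exp(−γ Λ(r)^β) dr/r = ∞, then lim_{r→0} ω(r) = 0. -/
open Real MeasureTheory Set Filter Topology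

/-- Oscillation decay implies continuity: a non-decreasing `ω : (0,R] → [0,∞)`
satisfying `ω(r/2) ≤ (1 − (λ(r)/4)e^{−γΛ(r)^β}) ω(r) + γ (r/λ(r)) e^{γΛ(r)^β}`
tends to `0` as `r → 0`, provided `∫_0 e^{γΛ(r)^β} dr/λ(r) < ∞` and
`∫_0 λ(r) e^{−γΛ(r)^β} dr/r = ∞`. -/
theorem statement15 (R : ℝ) (hR : 0 < R) (ω lam Λ : ℝ → ℝ) (γ β : ℝ)
    (hγ : 0 < γ) (hβ : 0 < β)
    (hω0 : ∀ r ∈ Ioc (0 : ℝ) R, 0 ≤ ω r)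
    (hωmono : MonotoneOn ω (Ioc (0 : ℝ) R))
    (hlam : ContinuousOn lam (Ioc (0 : ℝ) R))
    (hlammono : MonotoneOn lam (Ioc (0 : ℝ) R))
    (hlam01 : ∀ r ∈ Ioc (0 : ℝ) R, 0 < lam r ∧ lam r ≤ 1)
    (hΛ : ContinuousOn Λ (Ioc (0 : ℝ) R))
    (hΛanti : AntitoneOn Λ (Ioc (0 : ℝ) R))
    (hΛ1 : ∀ r ∈ Ioc (0 : ℝ) R, 1 ≤ Λ r)
    (hrec : ∀ r : ℝ, 0 < r → r ≤ R / 2 →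
      ω (r / 2) ≤ (1 - lam r / 4 * Real.exp (-γ * Λ r ^ β)) * ω r +
        γ * (r / lam r) * Real.exp (γ * Λ r ^ β))
    (hconv : IntegrableOn (fun r => Real.exp (γ * Λ r ^ β) / lam r)
      (Ioc (0 : ℝ) R))
    (hdiv : ¬ IntegrableOn (fun r => lam r * Real.exp (-γ * Λ r ^ β) / r)
      (Ioc (0 : ℝ) R)) :
    Tendsto ω (nhdsWithin 0 (Ioi 0)) (nhds 0) := by
  -- notation
  set g : ℝ → ℝ := fun r => lam r * Real.exp (-γ * Λ r ^ β) with hg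
  set h : ℝ → ℝ := fun r => Real.exp (γ * Λ r ^ β) / lam r with hh
  set G : ℝ → ℝ := fun r => lam r * Real.exp (-γ * Λ r ^ β) / r with hG
  set q : ℕ → ℝ := fun n => R / 2 / 2 ^ n with hq
  have h2n : ∀ n : ℕ, (1:ℝ) ≤ 2 ^ n := fun n => one_le_pow₀ one_le_two
  have hq0 : ∀ n, 0 < q n := fun n => by
    have : (0:ℝ) < 2 ^ n := by positivity
    exact div_pos (by linarith) this
  have hqR2 : ∀ n, q n ≤ R / 2 := fun n => by
    rw [hq]; exact div_le_self (by linarith) (h2n n)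
  have hqmem : ∀ n, q n ∈ Ioc (0:ℝ) R := fun n =>
    ⟨hq0 n, le_trans (hqR2 n) (by linarith)⟩
  have hqsucc : ∀ n, q (n + 1) = q n / 2 := fun n => by
    rw [hq]; simp [pow_succ]; ring
  have hqlt : ∀ n, q (n+1) < q n := fun n => by
    rw [hqsucc n]; linarith [hq0 n]
  have hqtend : Tendsto q atTop (𝓝 0) := by
    have : Tendsto (fun n : ℕ => (R/2) * (2⁻¹:ℝ) ^ n) atTop (𝓝 ((R/2) * 0)) :=
      Tendsto.const_mul _ (tendsto_pow_atTop_nhds_zero_of_lt_one (by norm_num) (by norm_num))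
    simpa [hq, div_eq_mul_inv, inv_pow, mul_comm] using this
  -- positivity facts
  have hgpos : ∀ r ∈ Ioc (0:ℝ) R, 0 < g r := fun r hr =>
    mul_pos (hlam01 r hr).1 (Real.exp_pos _)
  have hhpos : ∀ r ∈ Ioc (0:ℝ) R, 0 < h r := fun r hr =>
    div_pos (Real.exp_pos _) (hlam01 r hr).1
  have hGpos : ∀ r ∈ Ioc (0:ℝ) R, 0 < G r := fun r hr =>
    div_pos (mul_pos (hlam01 r hr).1 (Real.exp_pos _)) hr.1
  -- monotonicity of g, antitonicity of h
  have hpowanti : ∀ s ∈ Ioc (0:ℝ) R, ∀ t ∈ Ioc (0:ℝ) R, s ≤ t → Λ t ^ β ≤ Λ s ^ β := by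
    intro s hs t ht hst
    exact Real.rpow_le_rpow (le_trans zero_le_one (hΛ1 t ht)) (hΛanti hs ht hst) hβ.le
  have hgmono : ∀ s ∈ Ioc (0:ℝ) R, ∀ t ∈ Ioc (0:ℝ) R, s ≤ t → g s ≤ g t := by
    intro s hs t ht hst
    have h1 : lam s ≤ lam t := hlammono hs ht hst
    have h2 : Real.exp (-γ * Λ s ^ β) ≤ Real.exp (-γ * Λ t ^ β) := by
      apply Real.exp_le_exp.mpr
      nlinarith [hpowanti s hs t ht hst]
    exact mul_le_mul h1 h2 (Real.exp_pos _).le (hlam01 t ht).1.le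
  have hhanti : ∀ s ∈ Ioc (0:ℝ) R, ∀ t ∈ Ioc (0:ℝ) R, s ≤ t → h t ≤ h s := by
    intro s hs t ht hst
    have h2 : Real.exp (γ * Λ t ^ β) ≤ Real.exp (γ * Λ s ^ β) := by
      apply Real.exp_le_exp.mpr
      nlinarith [hpowanti s hs t ht hst]
    exact div_le_div₀ (Real.exp_pos _).le h2 (hlam01 s hs).1 (hlammono hs ht hst)
  -- continuity
  have hpowc : ContinuousOn (fun r => Λ r ^ β) (Ioc (0:ℝ) R) :=
    hΛ.rpow_const (fun x hx => Or.inr hβ.le)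
  have hhcont : ContinuousOn h (Ioc (0:ℝ) R) := by
    apply ContinuousOn.div
    · exact (continuous_exp.comp_continuousOn (continuousOn_const.mul hpowc))
    · exact hlam
    · exact fun x hx => (hlam01 x hx).1.ne'
  have hGcont : ContinuousOn G (Ioc (0:ℝ) R) := by
    apply ContinuousOn.div
    · exact hlam.mul (continuous_exp.comp_continuousOn (continuousOn_const.mul hpowc))
    · exact continuousOn_id
    · exact fun x hx => hx.1.ne'
  -- key claim
  have key : ∀ ε > (0:ℝ), ∃ r, r ∈ Ioc (0:ℝ) (R/2) ∧ ω r < ε := by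
    by_contra hcon
    push_neg at hcon
    obtain ⟨ε, hε, hεω⟩ := hcon
    -- interval integrability on dyadic blocks
    have hIccsub : ∀ n, Icc (q (n+1)) (q n) ⊆ Ioc (0:ℝ) R := fun n x hx =>
      ⟨lt_of_lt_of_le (hq0 (n+1)) hx.1, le_trans hx.2 (hqmem n).2⟩
    have hhii : ∀ n, IntervalIntegrable h volume (q (n+1)) (q n) := fun n => by
      apply ContinuousOn.intervalIntegrable
      rw [uIcc_of_le (hqlt n).le]
      exact hhcont.mono (hIccsub n)
    have hGii : ∀ n, IntervalIntegrable G volume (q (n+1)) (q n) := fun n => by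
      apply ContinuousOn.intervalIntegrable
      rw [uIcc_of_le (hqlt n).le]
      exact hGcont.mono (hIccsub n)
    -- step inequality
    have hstep : ∀ n, ε/4 * g (q n) - γ * q n * h (q n) ≤ ω (q n) - ω (q (n+1)) := by
      intro n
      have hr := hrec (q n) (hq0 n) (hqR2 n)
      rw [← hqsucc n] at hr
      have hmem := hqmem n
      have hωε : ε ≤ ω (q n) := hεω (q n) ⟨hq0 n, hqR2 n⟩
      have hgq : 0 ≤ g (q n) := (hgpos _ hmem).le
      have hmul : ε * (g (q n) / 4) ≤ ω (q n) * (g (q n) / 4) :=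
        mul_le_mul_of_nonneg_right hωε (by linarith)
      have heq1 : γ * (q n / lam (q n)) * Real.exp (γ * Λ (q n) ^ β)
          = γ * q n * h (q n) := by
        rw [hh]; ring
      have heq2 : (1 - lam (q n) / 4 * Real.exp (-γ * Λ (q n) ^ β)) * ω (q n)
          = ω (q n) - ω (q n) * (g (q n) / 4) := by
        rw [hg]; ring
      rw [heq1, heq2] at hr
      linarith
    -- telescoping
    have hsum1 : ∀ N, ∑ n ∈ Finset.range N, (ε/4 * g (q n) - γ * q n * h (q n)) ≤ ω (q 0) := by
      intro N
      have := Finset.sum_le_sum (fun n (_ : n ∈ Finset.range N) => hstep n)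
      rw [Finset.sum_range_sub' (fun n => ω (q n))] at this
      have : ∑ n ∈ Finset.range N, (ε/4 * g (q n) - γ * q n * h (q n))
          ≤ ω (q 0) - ω (q N) := this
      linarith [hω0 (q N) (hqmem N)]
    -- bound for the h-sum
    have hqle0 : ∀ n, q n ≤ q 0 := fun n => by
      have : q 0 = R / 2 := by simp [hq]
      rw [this]; exact hqR2 n
    have hIocsub : ∀ N, Ioc (q N) (q 0) ⊆ Ioc (0:ℝ) R := fun N x hx =>
      ⟨lt_trans (hq0 N) hx.1, le_trans hx.2 (hqmem 0).2⟩
    have hadjh : ∀ N, ∑ n ∈ Finset.range N, ∫ x in (q (n+1))..(q n), h x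
        = ∫ x in (q N)..(q 0), h x := by
      intro N
      have hadj : ∑ n ∈ Finset.range N, ∫ x in (q n)..(q (n+1)), h x = ∫ x in (q 0)..(q N), h x :=
        intervalIntegral.sum_integral_adjacent_intervals (fun i _ => (hhii i).symm)
      rw [intervalIntegral.integral_symm, ← hadj, ← Finset.sum_neg_distrib]
      exact Finset.sum_congr rfl fun i _ => (intervalIntegral.integral_symm _ _)
    have hadjG : ∀ N, ∑ n ∈ Finset.range N, ∫ x in (q (n+1))..(q n), G x
        = ∫ x in (q N)..(q 0), G x := by
      intro N
      have hadj : ∑ n ∈ Finset.range N, ∫ x in (q n)..(q (n+1)), G x = ∫ x in (q 0)..(q N), G x :=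
        intervalIntegral.sum_integral_adjacent_intervals (fun i _ => (hGii i).symm)
      rw [intervalIntegral.integral_symm, ← hadj, ← Finset.sum_neg_distrib]
      exact Finset.sum_congr rfl fun i _ => (intervalIntegral.integral_symm _ _)
    have hsum2 : ∀ N, ∑ n ∈ Finset.range N, q n * h (q n) ≤ 2 * ∫ x in Ioc (0:ℝ) R, h x := by
      intro N
      have hterm : ∀ n, q n * h (q n) ≤ 2 * ∫ x in (q (n+1))..(q n), h x := by
        intro n
        have hle : (∫ x in (q (n+1))..(q n), (fun _ => h (q n)) x) ≤ ∫ x in (q (n+1))..(q n), h x := by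
          apply intervalIntegral.integral_mono_on (hqlt n).le intervalIntegrable_const (hhii n)
          exact fun x hx => hhanti x (hIccsub n hx) (q n) (hqmem n) hx.2
        have hd : q n - q (n+1) = q n / 2 := by rw [hqsucc n]; ring
        rw [intervalIntegral.integral_const, smul_eq_mul, hd] at hle
        linarith
      calc ∑ n ∈ Finset.range N, q n * h (q n)
          ≤ ∑ n ∈ Finset.range N, 2 * ∫ x in (q (n+1))..(q n), h x :=
            Finset.sum_le_sum fun n _ => hterm n
        _ = 2 * ∫ x in (q N)..(q 0), h x := by rw [← Finset.mul_sum, hadjh N]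
        _ = 2 * ∫ x in Ioc (q N) (q 0), h x := by
            rw [intervalIntegral.integral_of_le (hqle0 N)]
        _ ≤ 2 * ∫ x in Ioc (0:ℝ) R, h x := by
            have : (∫ x in Ioc (q N) (q 0), h x) ≤ ∫ x in Ioc (0:ℝ) R, h x := by
              apply setIntegral_mono_set hconv
              · exact (ae_restrict_iff' measurableSet_Ioc).mpr
                  (ae_of_all _ fun x hx => (hhpos x hx).le)
              · exact HasSubset.Subset.eventuallyLE (hIocsub N)
            linarith
    -- bound for the G-integral by the g-sum
    have hsum3 : ∀ N, (∫ x in Ioc (q N) (q 0), G x) ≤ Real.log 2 * ∑ n ∈ Finset.range N, g (q n) := by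
      intro N
      have hterm : ∀ n, (∫ x in (q (n+1))..(q n), G x) ≤ g (q n) * Real.log 2 := by
        intro n
        have hfii : IntervalIntegrable (fun x => g (q n) * (1/x)) volume (q (n+1)) (q n) := by
          apply ContinuousOn.intervalIntegrable
          apply continuousOn_const.mul
          apply continuousOn_const.div continuousOn_id
          intro x hx
          rw [uIcc_of_le (hqlt n).le] at hx
          exact (lt_of_lt_of_le (hq0 (n+1)) hx.1).ne'
        have hle : (∫ x in (q (n+1))..(q n), G x) ≤ ∫ x in (q (n+1))..(q n), g (q n) * (1/x) := by
          apply intervalIntegral.integral_mono_on (hqlt n).le (hGii n) hfii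
          intro x hx
          have hxmem : x ∈ Ioc (0:ℝ) R := hIccsub n hx
          have hxpos : 0 < x := hxmem.1
          have : g x / x ≤ g (q n) / x := by
            gcongr
            exact hgmono x hxmem (q n) (hqmem n) hx.2
          calc G x = g x / x := rfl
            _ ≤ g (q n) / x := this
            _ = g (q n) * (1/x) := by ring
        rw [intervalIntegral.integral_const_mul, integral_one_div] at hle
        · have hq2 : q n / q (n+1) = 2 := by
            rw [hqsucc n]; field_simp [(hq0 n).ne']
          rwa [hq2] at hle
        · rw [uIcc_of_le (hqlt n).le]
          intro hmem
          exact absurd hmem.1 (not_le.mpr (hq0 (n+1)))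
      calc (∫ x in Ioc (q N) (q 0), G x)
          = ∫ x in (q N)..(q 0), G x := (intervalIntegral.integral_of_le (hqle0 N)).symm
        _ = ∑ n ∈ Finset.range N, ∫ x in (q (n+1))..(q n), G x := (hadjG N).symm
        _ ≤ ∑ n ∈ Finset.range N, g (q n) * Real.log 2 :=
            Finset.sum_le_sum fun n _ => hterm n
        _ = Real.log 2 * ∑ n ∈ Finset.range N, g (q n) := by
            rw [Finset.mul_sum]; exact Finset.sum_congr rfl fun n _ => mul_comm _ _
    -- combine: uniform bound on ∫ G over Ioc (q N) (q 0)
    set C : ℝ := ω (q 0) + γ * (2 * ∫ x in Ioc (0:ℝ) R, h x) with hC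
    have hbound : ∀ N, (∫ x in Ioc (q N) (q 0), G x) ≤ Real.log 2 * (4 / ε * C) := by
      intro N
      have h1 := hsum1 N
      have h2 := hsum2 N
      have h3 := hsum3 N
      have e0 : ∀ x ∈ Finset.range N, ε/4 * g (q x) - γ * q x * h (q x)
          = ε/4 * g (q x) - γ * (q x * h (q x)) := fun x _ => by ring
      rw [Finset.sum_congr rfl e0, Finset.sum_sub_distrib, ← Finset.mul_sum,
        ← Finset.mul_sum] at h1
      have hsg : ε/4 * ∑ n ∈ Finset.range N, g (q n) ≤ C := by
        have h4 := mul_le_mul_of_nonneg_left h2 hγ.le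
        rw [hC]; linarith
      have h5 : ∑ n ∈ Finset.range N, g (q n) ≤ 4/ε * C := by
        have h6 := mul_le_mul_of_nonneg_left hsg (le_of_lt (by positivity : (0:ℝ) < 4/ε))
        calc ∑ n ∈ Finset.range N, g (q n)
            = 4/ε * (ε/4 * ∑ n ∈ Finset.range N, g (q n)) := by field_simp
          _ ≤ 4/ε * C := h6
      exact h3.trans (mul_le_mul_of_nonneg_left h5 (Real.log_nonneg one_le_two))
    -- integrability of G near 0, contradiction
    have hnorm : ∀ N, (∫ x in Ioc (q N) (q 0), ‖G x‖) ≤ Real.log 2 * (4/ε * C) := by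
      intro N
      rw [setIntegral_congr_fun measurableSet_Ioc
        (fun x hx => norm_of_nonneg (hGpos x (hIocsub N hx)).le)]
      exact hbound N
    have hfi : ∀ N, IntegrableOn G (Ioc (q N) (q 0)) := by
      intro N
      apply IntegrableOn.mono_set _ Ioc_subset_Icc_self
      apply ContinuousOn.integrableOn_Icc
      apply hGcont.mono
      intro x hx
      exact ⟨lt_of_lt_of_le (hq0 N) hx.1, le_trans hx.2 (hqmem 0).2⟩
    have hint0 : IntegrableOn G (Ioc 0 (q 0)) :=
      integrableOn_Ioc_of_intervalIntegral_norm_bounded_left hfi hqtend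
        (Filter.Eventually.of_forall hnorm)
    have hint1 : IntegrableOn G (Ioc (q 0) R) := by
      apply IntegrableOn.mono_set _ Ioc_subset_Icc_self
      apply ContinuousOn.integrableOn_Icc
      apply hGcont.mono
      intro x hx
      exact ⟨lt_of_lt_of_le (hq0 0) hx.1, hx.2⟩
    apply hdiv
    rw [← Ioc_union_Ioc_eq_Ioc (hq0 0).le (hqmem 0).2]
    exact hint0.union hint1
  -- conclude
  rw [Metric.tendsto_nhdsWithin_nhds]
  intro ε hε
  obtain ⟨r, hr, hωr⟩ := key ε hε
  refine ⟨r, hr.1, fun x hx hxr => ?_⟩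
  rw [Real.dist_eq, sub_zero] at hxr ⊢
  have hxpos : (0:ℝ) < x := hx
  have hxr' : x < r := by rwa [abs_of_pos hxpos] at hxr
  have hxmem : x ∈ Ioc (0:ℝ) R := ⟨hxpos, by nlinarith [hr.2]⟩
  have hrmem : r ∈ Ioc (0:ℝ) R := ⟨hr.1, by linarith [hr.2]⟩
  have := hωmono hxmem hrmem hxr'.le
  rw [abs_of_nonneg (hω0 x hxmem)]
  linarith
end
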